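/- Let G be a connected bipartite fast finite simple graph and let w be a vertex of G. Then the induced subgraph of G on V(G) ∖ N(w), where N(w) is the open neighbourhood of w (so w itself is kept), contains no induced cycle of length at least 5. -/

import Mathlib

/-!
Suppose some hole `C` of `G` avoids `N(w)`. A bipartite graph has no `5`-cycle, so `C` has at
least six vertices. Let `c` be a vertex of `C` nearest to `w` and `c – x – y` the start of a
shortest path from `c` to `w`; then `y` has no neighbour on `C`. As `G` has no triangles, either
`x` is adjacent to two vertices at distance two along `C`, which with `y` and two further
vertices of `C` form an armchair, or `c` is the only neighbour of `x` among the five vertices of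
`C` around `c`, and these with `x` and `y` form a tripod centred at `c`.
-/

open SimpleGraph

/-- A set of vertices is independent if no two of its members are adjacent. -/
def IndepVertexSet {V : Type*} (G : SimpleGraph V) (A : Set V) : Prop :=
  ∀ ⦃u⦄, u ∈ A → ∀ ⦃v⦄, v ∈ A → ¬ G.Adj u v

/-- A graph is bipartite if its vertex set is partitioned into two independent sets. -/
def IsBipartiteGraph {V : Type*} (G : SimpleGraph V) : Prop :=
  ∃ A B : Set V, A ∪ B = Set.univ ∧ Disjoint A B ∧
    IndepVertexSet G A ∧ IndepVertexSet G B

/-- `G` contains an induced subgraph isomorphic to `H`. -/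
def HasInducedCopy {V W : Type*} (G : SimpleGraph V) (H : SimpleGraph W) : Prop :=
  ∃ S : Set V, Nonempty (G.induce S ≃g H)

/-- The armchair: a 4-cycle 0-1-2-3 with pendant vertices 4, 5, 6 attached to 0, 1, 2. -/
def armchair : SimpleGraph (Fin 7) :=
  SimpleGraph.fromRel (fun a b =>
    (a = 0 ∧ b = 1) ∨ (a = 1 ∧ b = 2) ∨ (a = 2 ∧ b = 3) ∨ (a = 3 ∧ b = 0) ∨
    (a = 0 ∧ b = 4) ∨ (a = 1 ∧ b = 5) ∨ (a = 2 ∧ b = 6))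

/-- The stirrer: two 4-cycles 0-1-2-3 and 0-1-4-5 sharing exactly the edge 0-1,
with a pendant vertex 6 attached to the endpoint 0 of the shared edge. -/
def stirrer : SimpleGraph (Fin 7) :=
  SimpleGraph.fromRel (fun a b =>
    (a = 0 ∧ b = 1) ∨ (a = 1 ∧ b = 2) ∨ (a = 2 ∧ b = 3) ∨ (a = 3 ∧ b = 0) ∨
    (a = 1 ∧ b = 4) ∨ (a = 4 ∧ b = 5) ∨ (a = 5 ∧ b = 0) ∨ (a = 0 ∧ b = 6))

/-- The tripod: the star K_{1,3} with each edge subdivided once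
(centre 0 with paths 0-1-2, 0-3-4, 0-5-6). -/
def tripod : SimpleGraph (Fin 7) :=
  SimpleGraph.fromRel (fun a b =>
    (a = 0 ∧ b = 1) ∨ (a = 1 ∧ b = 2) ∨ (a = 0 ∧ b = 3) ∨ (a = 3 ∧ b = 4) ∨
    (a = 0 ∧ b = 5) ∨ (a = 5 ∧ b = 6))

/-- A graph is fast if it contains no induced armchair, stirrer or tripod. -/
def Fast {V : Type*} (G : SimpleGraph V) : Prop :=
  ¬ HasInducedCopy G armchair ∧ ¬ HasInducedCopy G stirrer ∧ ¬ HasInducedCopy G tripod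

/-- A graph is hole-free if it contains no induced cycle of length at least 5. -/
def HoleFree {V : Type*} (G : SimpleGraph V) : Prop :=
  ∀ n : ℕ, 5 ≤ n → ¬ HasInducedCopy G (SimpleGraph.cycleGraph n)
open Fin.NatCast Fin.CommRing

lemma Fin.val_natCast_sub_natCast {n a b : ℕ} [NeZero n] (ha : a < n) (hb : b < n) :
    ((a : Fin n) - (b : Fin n)).val = if b ≤ a then a - b else n + a - b := by
  have hva : (a : Fin n).val = a := by rw [Fin.val_natCast, Nat.mod_eq_of_lt ha]
  have hvb : (b : Fin n).val = b := by rw [Fin.val_natCast, Nat.mod_eq_of_lt hb]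
  split_ifs with hba
  · rw [Fin.coe_sub_iff_le.mpr (Fin.le_def.mpr (by omega)), hva, hvb]
  · rw [Fin.coe_sub_iff_lt.mpr (Fin.lt_def.mpr (by omega)), hva, hvb]

namespace SimpleGraph

variable {V W : Type*} {G : SimpleGraph V}

lemma hasInducedCopy_iff_isIndContained {H : SimpleGraph W} :
    HasInducedCopy G H ↔ H ⊴ G := by
  rw [isIndContained_iff_exists_iso_induce]
  exact exists_congr fun _ => ⟨fun ⟨e⟩ => ⟨e.symm⟩, fun ⟨e⟩ => ⟨e.symm⟩⟩

lemma isIndContained_of_adj_iff {H : SimpleGraph W}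
    (hH : ∀ a b, (∀ c, H.Adj a c ↔ H.Adj b c) → a = b) (f : W → V)
    (hf : ∀ a b, G.Adj (f a) (f b) ↔ H.Adj a b) : H ⊴ G :=
  ⟨{ toFun := f
     inj' := fun a b hab => hH a b fun c => by rw [← hf, ← hf, hab]
     map_rel_iff' := hf _ _ }⟩

lemma IsBipartiteGraph.isBipartite (hG : IsBipartiteGraph G) : G.IsBipartite := by
  obtain ⟨A, B, hAB, hdisj, hA, hB⟩ := hG
  have mem : ∀ v, v ∈ A ∨ v ∈ B := fun v => (hAB.symm ▸ Set.mem_univ v : v ∈ A ∪ B)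
  refine IsBipartiteWith.isBipartite (s := A) (t := B) ⟨hdisj, fun v w hvw => ?_⟩
  rcases mem v with hv | hv
  · exact .inl ⟨hv, (mem w).resolve_left fun hw => hA hv hw hvw⟩
  · exact .inr ⟨hv, (mem w).resolve_right fun hw => hB hv hw hvw⟩

lemma IsBipartite.not_adj_of_adj_of_adj (hG : G.IsBipartite) {a b c : V}
    (hab : G.Adj a b) (hbc : G.Adj b c) : ¬ G.Adj a c := by
  obtain ⟨C⟩ := hG
  have := C.valid hab
  have := C.valid hbc
  exact fun hac => C.valid hac (by omega)

lemma IsBipartite.not_isIndContained_cycleGraph_of_odd (hG : G.IsBipartite) {n : ℕ}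
    (h2 : 2 ≤ n) (hn : Odd n) : ¬ cycleGraph n ⊴ G := by
  rintro ⟨φ⟩
  have := (hG.of_hom φ.toHom).chromaticNumber_le
  rw [chromaticNumber_cycleGraph_of_odd n h2 hn] at this
  exact absurd this (by decide)

def pathGraphEmbeddingCycleGraph {k n : ℕ} [NeZero n] (hkn : k < n) (r : Fin n) :
    pathGraph k ↪g cycleGraph n where
  toFun i := r + (i.val : Fin n)
  inj' i j hij := by
    dsimp only at hij
    have := congrArg Fin.val (add_left_cancel hij)
    rw [Fin.val_natCast, Fin.val_natCast, Nat.mod_eq_of_lt (by omega),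
      Nat.mod_eq_of_lt (by omega)] at this
    exact Fin.ext this
  map_rel_iff' {i j} := by
    change (cycleGraph n).Adj (r + _) (r + _) ↔ _
    simp only [cycleGraph_adj', add_sub_add_left_eq_sub, pathGraph_adj]
    rw [Fin.val_natCast_sub_natCast (by omega) (by omega),
      Fin.val_natCast_sub_natCast (by omega) (by omega)]
    split_ifs <;> omega

lemma cycleGraph_adj_add_one {n : ℕ} [NeZero n] (hn : 2 ≤ n) (i : Fin n) :
    (cycleGraph n).Adj i (i + 1) := by
  rw [cycleGraph_adj', add_sub_cancel_left, Fin.val_one', Nat.mod_eq_of_lt hn]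
  exact .inr rfl

/-- Take `s ∈ S` nearest to `w` and walk `s – x – y – ⋯ – w` along a shortest path: a neighbour
of `y` in `S` would be nearer to `w` than `s`. -/
lemma Connected.exists_adj_adj_forall_not_adj (hG : G.Connected) {w : V} {S : Set V}
    (hfin : S.Finite) (hne : S.Nonempty) (hwS : w ∉ S) (hS : ∀ s ∈ S, ¬ G.Adj w s) :
    ∃ s ∈ S, ∃ x y, G.Adj s x ∧ G.Adj x y ∧ ∀ t ∈ S, ¬ G.Adj y t := by
  obtain ⟨s, hs, hmin⟩ := S.exists_min_image (G.dist · w) hfin hne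
  obtain ⟨p, hp⟩ := (hG s w).exists_walk_length_eq_dist
  match p with
  | .nil => exact absurd hs hwS
  | .cons hsw .nil => exact absurd hsw.symm (hS s hs)
  | .cons hsx (.cons hxy q) =>
    refine ⟨s, hs, _, _, hsx, hxy, fun t ht hyt => ?_⟩
    have hq := dist_le (.cons hyt.symm q)
    have := hmin t ht
    simp only [Walk.length_cons] at hp hq
    omega

instance : DecidableRel armchair.Adj := fun _ _ => by
  simp only [armchair, fromRel_adj]; infer_instance

instance : DecidableRel tripod.Adj := fun _ _ => by
  simp only [tripod, fromRel_adj]; infer_instance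

lemma armchair_isIndContained (hG : G.IsBipartite) (p : pathGraph 5 ↪g G) {x y : V}
    (hx1 : G.Adj x (p 1)) (hx3 : G.Adj x (p 3)) (hxy : G.Adj x y)
    (hy : ∀ i, ¬ G.Adj y (p i)) : armchair ⊴ G := by
  have hp {i j} : (pathGraph 5).Adj i j → G.Adj (p i) (p j) := p.map_adj_iff.mpr
  have hx : ∀ i, G.Adj x (p i) ↔ i = 1 ∨ i = 3 := by
    have hx0 := hG.not_adj_of_adj_of_adj hx1 (hp (j := 0) (by simp [pathGraph_adj]))
    have hx2 := hG.not_adj_of_adj_of_adj hx1 (hp (j := 2) (by simp [pathGraph_adj]))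
    have hx4 := hG.not_adj_of_adj_of_adj hx3 (hp (j := 4) (by simp [pathGraph_adj]))
    intro i; fin_cases i <;> simpa
  have hx' : ∀ i, G.Adj (p i) x ↔ i = 1 ∨ i = 3 := fun i => G.adj_comm _ _ |>.trans (hx i)
  have hy' : ∀ i, ¬ G.Adj (p i) y := fun i h => hy i h.symm
  -- the 4-cycle `p 1 – x – p 3 – p 2` with pendants `p 0`, `y`, `p 4`
  refine isIndContained_of_adj_iff (by decide) ![p 1, x, p 3, p 2, p 0, y, p 4] fun a b => ?_
  fin_cases a <;> fin_cases b <;>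
    simp [hx, hx', hy, hy', hxy, hxy.symm, p.map_adj_iff, pathGraph_adj, armchair]

lemma tripod_isIndContained (hG : G.IsBipartite) (p : pathGraph 5 ↪g G) {x y : V}
    (hx0 : ¬ G.Adj x (p 0)) (hx2 : G.Adj x (p 2)) (hx4 : ¬ G.Adj x (p 4)) (hxy : G.Adj x y)
    (hy : ∀ i, ¬ G.Adj y (p i)) : tripod ⊴ G := by
  have hp {i j} : (pathGraph 5).Adj i j → G.Adj (p i) (p j) := p.map_adj_iff.mpr
  have hx : ∀ i, G.Adj x (p i) ↔ i = 2 := by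
    have hx1 := hG.not_adj_of_adj_of_adj hx2 (hp (j := 1) (by simp [pathGraph_adj]))
    have hx3 := hG.not_adj_of_adj_of_adj hx2 (hp (j := 3) (by simp [pathGraph_adj]))
    intro i; fin_cases i <;> simpa
  have hx' : ∀ i, G.Adj (p i) x ↔ i = 2 := fun i => G.adj_comm _ _ |>.trans (hx i)
  have hy' : ∀ i, ¬ G.Adj (p i) y := fun i h => hy i h.symm
  -- centre `p 2` with legs `p 1 – p 0`, `p 3 – p 4`, `x – y`
  refine isIndContained_of_adj_iff (by decide) ![p 2, p 1, p 0, p 3, p 4, x, y] fun a b => ?_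
  fin_cases a <;> fin_cases b <;>
    simp [hx, hx', hy, hy', hxy, hxy.symm, p.map_adj_iff, pathGraph_adj, tripod]

lemma Connected.exists_adj_of_embedding_cycleGraph (hconn : G.Connected) (hG : G.IsBipartite)
    (harm : ¬ armchair ⊴ G) (htri : ¬ tripod ⊴ G) (w : V) {n : ℕ} (hn : 6 ≤ n)
    (φ : cycleGraph n ↪g G) : ∃ i, G.Adj w (φ i) := by
  by_contra! hφ
  have : NeZero n := ⟨by omega⟩
  have hw : w ∉ Set.range φ := by
    rintro ⟨i, rfl⟩
    exact hφ (i + 1) (φ.map_adj_iff.mpr (cycleGraph_adj_add_one (by omega) i))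
  obtain ⟨_, ⟨i₀, rfl⟩, x, y, hx, hxy, hy⟩ :=
    hconn.exists_adj_adj_forall_not_adj (Set.finite_range φ) (Set.range_nonempty φ) hw
      (by rintro _ ⟨i, rfl⟩; exact hφ i)
  replace hy : ∀ i, ¬ G.Adj y (φ i) := fun i => hy _ ⟨i, rfl⟩
  let path (r : Fin n) : pathGraph 5 ↪g G := (pathGraphEmbeddingCycleGraph (by omega) r).trans φ
  have path_apply (r : Fin n) (k : Fin 5) : path r k = φ (r + (k.val : Fin n)) := rfl
  by_cases h : ∃ i, G.Adj x (φ i) ∧ G.Adj x (φ (i + 2))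
  · obtain ⟨i, hx1, hx3⟩ := h
    refine harm (armchair_isIndContained hG (path (i - 1)) ?_ ?_ hxy fun _ => hy _)
    · simpa [path_apply] using hx1
    · rwa [path_apply, show i - 1 + ((3 : Fin 5).val : Fin n) = i + 2 by simp; ring]
  · simp only [not_exists, not_and] at h
    refine htri (tripod_isIndContained hG (path (i₀ - 2)) (fun hx0 => ?_) ?_ (fun hx4 => ?_) hxy
      fun _ => hy _)
    · exact h (i₀ - 2) (by simpa [path_apply] using hx0) (by simpa using hx.symm)
    · simpa [path_apply] using hx.symm
    · refine h i₀ hx.symm ?_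
      rwa [path_apply, show i₀ - 2 + ((4 : Fin 5).val : Fin n) = i₀ + 2 by simp; ring] at hx4

end SimpleGraph

theorem fast_delete_neighborhood_holeFree_general {V : Type*} (G : SimpleGraph V)
    (hconn : G.Connected) (hbip : IsBipartiteGraph G) (hfast : Fast G) (w : V) :
    HoleFree (G.induce {v : V | v ∉ G.neighborSet w}) := by
  intro n hn hhole
  obtain ⟨ψ⟩ := hasInducedCopy_iff_isIndContained.mp hhole
  let φ : cycleGraph n ↪g G := (Embedding.induce _).comp ψ
  obtain rfl | h6 : n = 5 ∨ 6 ≤ n := by omega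
  · exact hbip.isBipartite.not_isIndContained_cycleGraph_of_odd (by norm_num) (by decide)
      φ.isIndContained
  · obtain ⟨i, hi⟩ := hconn.exists_adj_of_embedding_cycleGraph hbip.isBipartite
      (fun h => hfast.1 (hasInducedCopy_iff_isIndContained.mpr h))
      (fun h => hfast.2.2 (hasInducedCopy_iff_isIndContained.mpr h)) w h6 φ
    exact (ψ i).2 hi

/-- For a connected bipartite fast finite simple graph `G` and a vertex `w`,
the induced subgraph on `V ∖ N(w)` (keeping `w` itself) is hole-free. -/
theorem fast_delete_neighborhood_holeFree {V : Type*} [Fintype V] (G : SimpleGraph V)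
    (hconn : G.Connected) (hbip : IsBipartiteGraph G) (hfast : Fast G) (w : V) :
    HoleFree (G.induce {v : V | v ∉ G.neighborSet w}) :=
  fast_delete_neighborhood_holeFree_general G hconn hbip hfast w
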